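/- Let A, M₁, …, M_k, L be n×n real matrices such that A ≤ M₁M₂⋯M_k L entrywise, each M₁, …, M_k is a nonsingular M-matrix, and the off-diagonal part of L is nonpositive (L_a ≤ 0). Assume there exists a nonzero vector e ≥ 0 with Ae ≥ 0 such that at least one of the matrices M₁, …, M_k, L connects N⁰(Ae) with N⁺(Ae). Then the matrix L is itself a nonsingular M-matrix. -/

import Mathlib

open Matrix

/-- A real square matrix is a nonsingular M-matrix if its off-diagonal entries are
nonpositive, it is invertible, and all entries of its inverse are nonnegative. -/
def IsNonsingMMatrix {n : ℕ} (M : Matrix (Fin n) (Fin n) ℝ) : Prop :=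
  (∀ i j, i ≠ j → M i j ≤ 0) ∧ IsUnit M.det ∧ ∀ i j, 0 ≤ M⁻¹ i j

/-- `A` connects `N1` with `N2`: from every index in `N1` there is a path of
nonzero entries of `A` of length `r ≥ 1` ending in `N2`. -/
def Connects {n : ℕ} (A : Matrix (Fin n) (Fin n) ℝ) (N1 N2 : Set (Fin n)) : Prop :=
  ∀ i0 ∈ N1, ∃ r : ℕ, 1 ≤ r ∧ ∃ path : ℕ → Fin n, path 0 = i0 ∧ path r ∈ N2 ∧
    ∀ k, 1 ≤ k → k ≤ r → A (path (k - 1)) (path k) ≠ 0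

/-- `N⁰(v)`, the set of indices where `v` vanishes. -/
def Nzero {n : ℕ} (v : Fin n → ℝ) : Set (Fin n) := {i | v i = 0}

/-- `N⁺(v)`, the set of indices where `v` is positive. -/
def Npos {n : ℕ} (v : Fin n → ℝ) : Set (Fin n) := {i | 0 < v i}

/-- Diagonal part `A_d` of a matrix. -/
noncomputable def diagPart {n : ℕ} (A : Matrix (Fin n) (Fin n) ℝ) : Matrix (Fin n) (Fin n) ℝ :=
  Matrix.diagonal fun i => A i i

/-- Positive off-diagonal part `A_a⁺` of a matrix. -/
noncomputable def offDiagPos {n : ℕ} (A : Matrix (Fin n) (Fin n) ℝ) : Matrix (Fin n) (Fin n) ℝ :=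
  Matrix.of fun i j => if i ≠ j ∧ 0 < A i j then A i j else 0

/-- Negative off-diagonal part `A_a⁻ = A - A_d - A_a⁺` of a matrix. -/
noncomputable def offDiagNeg {n : ℕ} (A : Matrix (Fin n) (Fin n) ℝ) : Matrix (Fin n) (Fin n) ℝ :=
  (A - diagPart A) - offDiagPos A

open Finset

/-
The vector `w = L e` satisfies `A e ≤ M₁ ⋯ M_k w`. Multiplying by the nonnegative inverses
`M₁⁻¹, M₂⁻¹, …` in turn keeps the left side nonnegative and never shrinks its support, and a
factor `Mᵢ` that connects the zeros of the current vector with its support makes it strictly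
positive, because `Mᵢ⁻¹` is positive along every path of nonzero entries of `Mᵢ`. Hence
`w ≥ 0`, and `L` connects `N⁰(w)` with `N⁺(w)` (vacuously if `w > 0`).

For a Z-matrix `L` with `x ≥ 0`, `L x ≥ 0` and `L` connecting `N⁰(L x)` with `N⁺(L x)`, zeros of
`x` propagate along the nonzero entries of `L`, so `x > 0`. If `L y ≥ 0` and `y` had a negative
entry, the shift `y + m x` with the least `m` making it nonnegative would have a zero entry and
satisfy the same hypotheses; so `L y ≥ 0` forces `y ≥ 0`, which makes `L` a nonsingular M-matrix.
-/

section Monotone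

variable {m n R : Type*} [Fintype n] [Semiring R] [PartialOrder R] [IsOrderedRing R]

theorem Matrix.mulVec_le_mulVec_of_nonneg {A : Matrix m n R} (hA : ∀ i j, 0 ≤ A i j)
    {u v : n → R} (huv : u ≤ v) : A *ᵥ u ≤ A *ᵥ v := fun i =>
  sum_le_sum fun j _ => mul_le_mul_of_nonneg_left (huv j) (hA i j)

theorem Matrix.mulVec_le_mulVec_of_le {A B : Matrix m n R} (hAB : ∀ i j, A i j ≤ B i j)
    {v : n → R} (hv : 0 ≤ v) : A *ᵥ v ≤ B *ᵥ v := fun i =>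
  sum_le_sum fun j _ => mul_le_mul_of_nonneg_right (hAB i j) (hv j)

end Monotone

variable {n : ℕ}

def IsZMatrix (L : Matrix (Fin n) (Fin n) ℝ) : Prop :=
  ∀ i j, i ≠ j → L i j ≤ 0

namespace Connects

variable {A : Matrix (Fin n) (Fin n) ℝ} {N₁ N₂ : Set (Fin n)}

theorem mono {N₁' N₂' : Set (Fin n)} (h : Connects A N₁ N₂) (h₁ : N₁' ⊆ N₁) (h₂ : N₂ ⊆ N₂') :
    Connects A N₁' N₂' := fun i hi => by
  obtain ⟨r, hr, p, hp0, hpr, hstep⟩ := h i (h₁ hi)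
  exact ⟨r, hr, p, hp0, h₂ hpr, hstep⟩

theorem exists_mem_of_invariant (h : Connects A N₁ N₂) {S : Set (Fin n)}
    (hS : ∀ i j, i ∈ S → A i j ≠ 0 → j ∈ S) {i : Fin n} (hi₁ : i ∈ N₁) (hiS : i ∈ S) :
    ∃ j ∈ N₂, j ∈ S := by
  obtain ⟨r, -, p, hp0, hpr, hstep⟩ := h i hi₁
  have hpath : ∀ t ≤ r, p t ∈ S := by
    intro t
    induction t with
    | zero => exact fun _ => hp0 ▸ hiS
    | succ t ih =>
      intro ht
      exact hS _ _ (ih (Nat.le_of_succ_le ht)) (by simpa using hstep (t + 1) (by omega) ht)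
  exact ⟨p r, hpr, hpath r le_rfl⟩

theorem of_npos_subset {u v : Fin n → ℝ} (h : Connects A (Nzero u) (Npos u)) (hu : 0 ≤ u)
    (huv : Npos u ⊆ Npos v) : Connects A (Nzero v) (Npos v) := by
  refine h.mono (fun i hvi => ?_) huv
  by_contra hui
  exact (show 0 < v i from huv ((hu i).lt_of_ne (Ne.symm hui))).ne' hvi

end Connects

namespace IsNonsingMMatrix

variable {M : Matrix (Fin n) (Fin n) ℝ} (hM : IsNonsingMMatrix M)
include hM

theorem one_apply_le_add_sum (i j : Fin n) {s : Finset (Fin n)} (hs : j ∉ s) :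
    (1 : Matrix (Fin n) (Fin n) ℝ) i j ≤ M⁻¹ i j * M j j + ∑ l ∈ s, M⁻¹ i l * M l j := by
  have hsub : s ⊆ univ.erase j := fun l hl => mem_erase.2 ⟨ne_of_mem_of_not_mem hl hs, mem_univ l⟩
  have hrest : ∑ l ∈ univ.erase j \ s, M⁻¹ i l * M l j ≤ 0 := sum_nonpos fun l hl =>
    mul_nonpos_of_nonneg_of_nonpos (hM.2.2 i l) (hM.1 l j (ne_of_mem_erase (mem_sdiff.1 hl).1))
  calc (1 : Matrix (Fin n) (Fin n) ℝ) i j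
      = M⁻¹ i j * M j j + ∑ l ∈ univ.erase j, M⁻¹ i l * M l j := by
        rw [← nonsing_inv_mul M hM.2.1, mul_apply]
        exact (add_sum_erase _ _ (mem_univ j)).symm
    _ = M⁻¹ i j * M j j + (∑ l ∈ univ.erase j \ s, M⁻¹ i l * M l j +
          ∑ l ∈ s, M⁻¹ i l * M l j) := by rw [sum_sdiff hsub]
    _ ≤ M⁻¹ i j * M j j + ∑ l ∈ s, M⁻¹ i l * M l j := by linarith

theorem inv_apply_self_pos (i : Fin n) : 0 < M⁻¹ i i := by
  have h := hM.one_apply_le_add_sum i i (s := ∅) (notMem_empty i)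
  rw [one_apply_eq, sum_empty, add_zero] at h
  refine (hM.2.2 i i).lt_of_ne fun h0 => ?_
  rw [← h0, zero_mul] at h
  linarith

theorem inv_apply_pos_of_ne_zero {i l j : Fin n} (hil : 0 < M⁻¹ i l) (hlj : M l j ≠ 0) :
    0 < M⁻¹ i j := by
  rcases eq_or_ne l j with rfl | hne
  · exact hil
  have h := hM.one_apply_le_add_sum i j (s := {l}) (notMem_singleton.2 hne.symm)
  rw [sum_singleton] at h
  have hδ : (0 : ℝ) ≤ (1 : Matrix (Fin n) (Fin n) ℝ) i j := by
    rw [one_apply]; split_ifs <;> norm_num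
  have hneg : M⁻¹ i l * M l j < 0 := mul_neg_of_pos_of_neg hil ((hM.1 l j hne).lt_of_ne hlj)
  refine (hM.2.2 i j).lt_of_ne fun h0 => ?_
  rw [← h0, zero_mul] at h
  linarith

theorem inv_mulVec_nonneg {u : Fin n → ℝ} (hu : 0 ≤ u) : 0 ≤ M⁻¹ *ᵥ u := fun i => by
  rw [Pi.zero_apply, mulVec_apply_eq_sum]
  exact sum_nonneg fun j _ => mul_nonneg (hM.2.2 i j) (hu j)

theorem inv_mulVec_apply_pos {u : Fin n → ℝ} (hu : 0 ≤ u) {i j : Fin n} (hij : 0 < M⁻¹ i j)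
    (huj : 0 < u j) : 0 < (M⁻¹ *ᵥ u) i :=
  (mul_pos hij huj).trans_le <| single_le_sum (f := fun l => M⁻¹ i l * u l)
    (fun l _ => mul_nonneg (hM.2.2 i l) (hu l)) (mem_univ j)

theorem npos_subset_npos_inv_mulVec {u : Fin n → ℝ} (hu : 0 ≤ u) :
    Npos u ⊆ Npos (M⁻¹ *ᵥ u) := fun i hi =>
  hM.inv_mulVec_apply_pos hu (hM.inv_apply_self_pos i) hi

theorem inv_mulVec_pos_of_connects {u : Fin n → ℝ} (hu : 0 ≤ u)
    (hc : Connects M (Nzero u) (Npos u)) (i : Fin n) : 0 < (M⁻¹ *ᵥ u) i := by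
  rcases (hu i).eq_or_lt with hi | hi
  · obtain ⟨j, huj, hij⟩ := hc.exists_mem_of_invariant (S := {j | 0 < M⁻¹ i j})
      (fun _ _ hl hlj => hM.inv_apply_pos_of_ne_zero hl hlj) hi.symm (hM.inv_apply_self_pos i)
    exact hM.inv_mulVec_apply_pos hu hij huj
  · exact hM.npos_subset_npos_inv_mulVec hu hi

theorem inv_mulVec_le_of_le_mulVec {u v : Fin n → ℝ} (h : u ≤ M *ᵥ v) : M⁻¹ *ᵥ u ≤ v := by
  calc M⁻¹ *ᵥ u ≤ M⁻¹ *ᵥ (M *ᵥ v) := mulVec_le_mulVec_of_nonneg hM.2.2 h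
    _ = v := by rw [mulVec_mulVec, nonsing_inv_mul M hM.2.1, one_mulVec]

end IsNonsingMMatrix

section Product

variable {l : List (Matrix (Fin n) (Fin n) ℝ)} {u w : Fin n → ℝ}

theorem nonneg_and_npos_subset_of_le_prod_mulVec (hl : ∀ N ∈ l, IsNonsingMMatrix N)
    (hu : 0 ≤ u) (huw : u ≤ l.prod *ᵥ w) : 0 ≤ w ∧ Npos u ⊆ Npos w := by
  induction l generalizing u with
  | nil =>
    rw [List.prod_nil, one_mulVec] at huw
    exact ⟨hu.trans huw, fun i hi => lt_of_lt_of_le hi (huw i)⟩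
  | cons N l ih =>
    have hN := hl N List.mem_cons_self
    rw [List.prod_cons, ← mulVec_mulVec] at huw
    obtain ⟨hw, hsub⟩ := ih (fun N' h => hl N' (List.mem_cons_of_mem _ h))
      (hN.inv_mulVec_nonneg hu) (hN.inv_mulVec_le_of_le_mulVec huw)
    exact ⟨hw, (hN.npos_subset_npos_inv_mulVec hu).trans hsub⟩

theorem pos_of_le_prod_mulVec_of_connects (hl : ∀ N ∈ l, IsNonsingMMatrix N)
    (hu : 0 ≤ u) (huw : u ≤ l.prod *ᵥ w) {N : Matrix (Fin n) (Fin n) ℝ} (hNl : N ∈ l)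
    (hc : Connects N (Nzero u) (Npos u)) (i : Fin n) : 0 < w i := by
  induction l generalizing u with
  | nil => simp at hNl
  | cons N' l ih =>
    have hN' := hl N' List.mem_cons_self
    have hl' : ∀ N ∈ l, IsNonsingMMatrix N := fun N h => hl N (List.mem_cons_of_mem _ h)
    rw [List.prod_cons, ← mulVec_mulVec] at huw
    have hu' := hN'.inv_mulVec_nonneg hu
    have huw' := hN'.inv_mulVec_le_of_le_mulVec huw
    rcases List.mem_cons.1 hNl with rfl | hNl
    · exact (nonneg_and_npos_subset_of_le_prod_mulVec hl' hu' huw').2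
        (hN'.inv_mulVec_pos_of_connects hu hc i)
    · exact ih hl' hu' huw' hNl (hc.of_npos_subset hu (hN'.npos_subset_npos_inv_mulVec hu))

end Product

namespace IsZMatrix

variable {L : Matrix (Fin n) (Fin n) ℝ} (hL : IsZMatrix L)
include hL

theorem apply_mul_nonpos {z : Fin n → ℝ} (hz : 0 ≤ z) {i : Fin n} (hi : z i = 0) (j : Fin n) :
    L i j * z j ≤ 0 := by
  rcases eq_or_ne i j with rfl | hij
  · rw [hi, mul_zero]
  · exact mul_nonpos_of_nonpos_of_nonneg (hL i j hij) (hz j)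

theorem mulVec_apply_nonpos {z : Fin n → ℝ} (hz : 0 ≤ z) {i : Fin n} (hi : z i = 0) :
    (L *ᵥ z) i ≤ 0 := by
  rw [mulVec_apply_eq_sum]
  exact sum_nonpos fun j _ => hL.apply_mul_nonpos hz hi j

theorem eq_zero_of_mulVec_apply_nonneg {z : Fin n → ℝ} (hz : 0 ≤ z) {i j : Fin n} (hi : z i = 0)
    (hLz : 0 ≤ (L *ᵥ z) i) (hij : L i j ≠ 0) : z j = 0 := by
  have hsum : ∑ l, L i l * z l = 0 := le_antisymm (hL.mulVec_apply_nonpos hz hi) hLz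
  have hterm := (sum_eq_zero_iff_of_nonpos fun l _ => hL.apply_mul_nonpos hz hi l).1 hsum j
    (mem_univ j)
  exact (mul_eq_zero.1 hterm).resolve_left hij

theorem pos_of_connects {x : Fin n → ℝ} (hx : 0 ≤ x) (hLx : 0 ≤ L *ᵥ x)
    (hc : Connects L (Nzero (L *ᵥ x)) (Npos (L *ᵥ x))) (i : Fin n) : 0 < x i := by
  refine (hx i).lt_of_ne fun hi => ?_
  have hLxi : (L *ᵥ x) i = 0 := le_antisymm (hL.mulVec_apply_nonpos hx hi.symm) (hLx i)
  obtain ⟨j, hj, hxj⟩ := hc.exists_mem_of_invariant (S := {j | x j = 0})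
    (fun k l hk hkl => hL.eq_zero_of_mulVec_apply_nonneg hx hk (hLx k) hkl) hLxi hi.symm
  exact (hL.mulVec_apply_nonpos hx hxj).not_gt hj

theorem nonneg_of_mulVec_nonneg {x : Fin n → ℝ} (hx : 0 ≤ x) (hLx : 0 ≤ L *ᵥ x)
    (hc : Connects L (Nzero (L *ᵥ x)) (Npos (L *ᵥ x))) {y : Fin n → ℝ} (hLy : 0 ≤ L *ᵥ y) :
    0 ≤ y := by
  have hxpos := hL.pos_of_connects hx hLx hc
  by_contra hy
  obtain ⟨i₀, hi₀⟩ : ∃ i, y i < 0 := by simpa [Pi.le_def] using hy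
  obtain ⟨i, -, hmax⟩ := exists_max_image univ (fun j => -y j / x j) ⟨i₀, mem_univ i₀⟩
  set m := -y i / x i
  have hm : 0 < m := (div_pos (neg_pos.2 hi₀) (hxpos i₀)).trans_le (hmax i₀ (mem_univ i₀))
  have hz : 0 ≤ y + m • x := fun j => by
    have := (div_le_iff₀ (hxpos j)).1 (hmax j (mem_univ j))
    simp only [Pi.add_apply, Pi.smul_apply, smul_eq_mul, Pi.zero_apply]
    linarith
  have hzi : (y + m • x) i = 0 := by
    simp only [Pi.add_apply, Pi.smul_apply, smul_eq_mul, m, div_mul_cancel₀ _ (hxpos i).ne']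
    ring
  have hLz : L *ᵥ (y + m • x) = L *ᵥ y + m • (L *ᵥ x) := by
    rw [mulVec_add, mulVec_smul]
  have hmLx : m • (L *ᵥ x) ≤ L *ᵥ (y + m • x) := by
    rw [hLz]; exact le_add_of_nonneg_left hLy
  have hLz0 : 0 ≤ L *ᵥ (y + m • x) := (smul_nonneg hm.le hLx).trans hmLx
  have hsub : Npos (L *ᵥ x) ⊆ Npos (L *ᵥ (y + m • x)) := fun j hj =>
    (mul_pos hm hj).trans_le (hmLx j)
  exact (hL.pos_of_connects hz hLz0 (hc.of_npos_subset hLx hsub) i).ne' hzi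

theorem isNonsingMMatrix_of_monotone (hmono : ∀ y, 0 ≤ L *ᵥ y → 0 ≤ y) :
    IsNonsingMMatrix L := by
  have hdet : IsUnit L.det := by
    refine isUnit_iff_ne_zero.2 fun h0 => ?_
    obtain ⟨v, hv0, hv⟩ := exists_mulVec_eq_zero_iff.2 h0
    have hpos : 0 ≤ v := hmono v hv.ge
    have hneg : 0 ≤ -v := hmono (-v) (by rw [mulVec_neg, hv, neg_zero])
    exact hv0 (le_antisymm (neg_nonneg.1 hneg) hpos)
  refine ⟨hL, hdet, fun i j => ?_⟩
  have hcol : 0 ≤ L *ᵥ (L⁻¹ *ᵥ Pi.single j 1) := by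
    rw [mulVec_mulVec, mul_nonsing_inv L hdet, one_mulVec]
    exact Pi.single_nonneg.2 zero_le_one
  simpa [mulVec_single] using hmono _ hcol i

theorem isNonsingMMatrix_of_connects {x : Fin n → ℝ} (hx : 0 ≤ x) (hLx : 0 ≤ L *ᵥ x)
    (hc : Connects L (Nzero (L *ᵥ x)) (Npos (L *ᵥ x))) : IsNonsingMMatrix L :=
  hL.isNonsingMMatrix_of_monotone fun _ hLy => hL.nonneg_of_mulVec_nonneg hx hLx hc hLy

end IsZMatrix

theorem L_is_M_matrix_general
    {n k : ℕ} (A L : Matrix (Fin n) (Fin n) ℝ) (M : Fin k → Matrix (Fin n) (Fin n) ℝ)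
    (hle : ∀ i j, A i j ≤ ((List.ofFn M).prod * L) i j)
    (hM : ∀ i, IsNonsingMMatrix (M i))
    (hL : ∀ i j, i ≠ j → L i j ≤ 0)
    (e : Fin n → ℝ) (he : ∀ i, 0 ≤ e i)
    (hAe : ∀ i, 0 ≤ A.mulVec e i)
    (hconn : (∃ i, Connects (M i) (Nzero (A.mulVec e)) (Npos (A.mulVec e))) ∨
      Connects L (Nzero (A.mulVec e)) (Npos (A.mulVec e))) :
    IsNonsingMMatrix L := by
  have hMs : ∀ N ∈ List.ofFn M, IsNonsingMMatrix N := by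
    simpa only [List.forall_mem_ofFn_iff] using hM
  have hAe' : 0 ≤ A *ᵥ e := hAe
  have hdom : A *ᵥ e ≤ (List.ofFn M).prod *ᵥ (L *ᵥ e) := by
    rw [mulVec_mulVec]; exact mulVec_le_mulVec_of_le hle he
  obtain ⟨hLe, hsupp⟩ := nonneg_and_npos_subset_of_le_prod_mulVec hMs hAe' hdom
  refine IsZMatrix.isNonsingMMatrix_of_connects hL he hLe ?_
  rcases hconn with ⟨i, hc⟩ | hc
  · have hpos := pos_of_le_prod_mulVec_of_connects hMs hAe' hdom ((List.mem_ofFn.2 ⟨i, rfl⟩)) hc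
    exact fun j hj => absurd hj (hpos j).ne'
  · exact hc.of_npos_subset hAe' hsupp

theorem L_is_M_matrix
    {n k : ℕ} (A L : Matrix (Fin n) (Fin n) ℝ) (M : Fin k → Matrix (Fin n) (Fin n) ℝ)
    (hle : ∀ i j, A i j ≤ ((List.ofFn M).prod * L) i j)
    (hM : ∀ i, IsNonsingMMatrix (M i))
    (hL : ∀ i j, i ≠ j → L i j ≤ 0)
    (e : Fin n → ℝ) (he0 : e ≠ 0) (he : ∀ i, 0 ≤ e i)
    (hAe : ∀ i, 0 ≤ A.mulVec e i)
    (hconn : (∃ i, Connects (M i) (Nzero (A.mulVec e)) (Npos (A.mulVec e))) ∨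
      Connects L (Nzero (A.mulVec e)) (Npos (A.mulVec e))) :
    IsNonsingMMatrix L :=
  L_is_M_matrix_general A L M hle hM hL e he hAe hconn
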